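/- Suppose every word of length $n$ over $\Sigma_k$ contains an $r$-power (for a rational $r \geq 1$). Then every infinite word $w$ over $\Sigma_k$ contains a circular $(1+r)$-power: there exist a nonempty word $z$, a rational $\beta \geq 1+r$, and words $x_1, t, x_2$ such that $x_1 t x_2$ is a factor of $w$ and $x_2 x_1$ is a $\beta$-power with period $z$. -/

import Mathlib

/-!
The factors of length `n` of an infinite word over a finite alphabet take finitely many values,
so some factor `v` of length `n` occurs at two positions at distance at least `n`. By hypothesis
`v` contains an `r`-power `u` with period `z`, so `w` contains `u ⋯ u`. Take `x₂` to be the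
second occurrence of `u`, `x₁` the last `|z|` letters of the first one and `t` the gap between
them: then `x₂ x₁` is `u` extended by one more period, a `(1 + r)`-power with period `z`.
-/

/-- `u` occurs as a factor of the infinite word `w` (at some position `i`). -/
def FactorOf {α : Type*} (u : List α) (w : ℕ → α) : Prop :=
  ∃ i : ℕ, u = (List.range u.length).map (fun k => w (i + k))

/-- `u` is an `r`-power with period `z`: `z` is nonempty, `u` begins with `z`,
`|z|` is a period of `u`, and `|u| = r·|z|`. -/
def IsPowOf {α : Type*} (u z : List α) (r : ℚ) : Prop :=
  z ≠ [] ∧ z <+: u ∧ (∀ i : ℕ, i + z.length < u.length → u[i + z.length]? = u[i]?) ∧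
    (u.length : ℚ) = r * z.length

theorem IsPowOf.append_drop {α : Type*} {u z : List α} {r : ℚ} (h : IsPowOf u z r) :
    IsPowOf (u ++ u.drop (u.length - z.length)) z (1 + r) := by
  obtain ⟨hz, hpre, hper, hlen⟩ := h
  have hpL : z.length ≤ u.length := hpre.length_le
  refine ⟨hz, hpre.trans (u.prefix_append _), fun i hi => ?_, ?_⟩
  · simp only [List.length_append, List.length_drop] at hi
    rw [List.getElem?_append_left (show i < u.length by omega)]
    rcases lt_or_ge (i + z.length) u.length with hlt | hge
    · rw [List.getElem?_append_left hlt, hper i hlt]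
    · rw [List.getElem?_append_right hge, List.getElem?_drop]
      congr 1
      omega
  · simp only [List.length_append, List.length_drop]
    push_cast [Nat.sub_sub_self hpL]
    rw [hlen]
    ring

section FactorAt

variable {α : Type*} (w : ℕ → α)

def factorAt (i m : ℕ) : List α :=
  (List.range m).map (fun k => w (i + k))

@[simp]
theorem length_factorAt (i m : ℕ) : (factorAt w i m).length = m := by
  simp [factorAt]

theorem factorOf_factorAt (i m : ℕ) : FactorOf (factorAt w i m) w :=
  ⟨i, by rw [length_factorAt]; rfl⟩

theorem factorAt_add (i a b : ℕ) :
    factorAt w i (a + b) = factorAt w i a ++ factorAt w (i + a) b := by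
  simp only [factorAt, List.range_add, List.map_append, List.map_map, Function.comp_def,
    Nat.add_assoc]

theorem drop_factorAt (i m d : ℕ) : (factorAt w i m).drop d = factorAt w (i + d) (m - d) := by
  rcases le_total d m with hdm | hmd
  · conv_lhs => rw [← Nat.add_sub_cancel' hdm, factorAt_add]
    exact List.drop_left' (length_factorAt w i d)
  · rw [List.drop_eq_nil_of_le (by simpa using hmd), Nat.sub_eq_zero_of_le hmd]
    rfl

theorem eq_factorAt_of_append_eq {s u t : List α} {i m : ℕ} (h : s ++ u ++ t = factorAt w i m) :
    u = factorAt w (i + s.length) u.length := by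
  have hm : m = s.length + u.length + t.length := by
    simpa [Nat.add_assoc] using (congrArg List.length h).symm
  rw [hm, factorAt_add, factorAt_add] at h
  exact (List.append_inj (List.append_inj h (by simp)).1 (by simp)).2

theorem factorOf_append_gap {i a j : ℕ} (h : i + a ≤ j) (b : ℕ) :
    FactorOf (factorAt w i a ++ factorAt w (i + a) (j - (i + a)) ++ factorAt w j b) w := by
  obtain ⟨g, rfl⟩ := Nat.exists_eq_add_of_le h
  rw [Nat.add_sub_cancel_left, ← factorAt_add, Nat.add_assoc i a g, ← factorAt_add]
  exact factorOf_factorAt w i _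

/-- Pigeonhole on the finitely many words of length `n`; sampling at multiples of `n` makes the
two occurrences disjoint. -/
theorem exists_add_le_factorAt_eq [Finite α] (n : ℕ) :
    ∃ A B, A + n ≤ B ∧ factorAt w A n = factorAt w B n := by
  obtain ⟨a, -, b, -, hab, heq⟩ := Set.infinite_univ.exists_lt_map_eq_of_mapsTo
    (f := fun m => factorAt w (m * n) n) (fun m _ => length_factorAt w (m * n) n)
    (List.finite_length_eq α n)
  exact ⟨a * n, b * n, by nlinarith, heq⟩

end FactorAt

theorem unavoidable_circular_power {k n : ℕ} (r : ℚ)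
    (hn : ∀ v : List (Fin k), v.length = n → ∃ u z : List (Fin k), u <:+: v ∧ IsPowOf u z r)
    (w : ℕ → Fin k) :
    ∃ (z : List (Fin k)) (β : ℚ) (x₁ t x₂ : List (Fin k)),
      1 + r ≤ β ∧ FactorOf (x₁ ++ t ++ x₂) w ∧ IsPowOf (x₂ ++ x₁) z β := by
  obtain ⟨A, B, hAB, hrep⟩ := exists_add_le_factorAt_eq w n
  obtain ⟨u, z, ⟨pre, suf, hv⟩, hpow⟩ := hn (factorAt w A n) (length_factorAt w A n)
  have hfirst := eq_factorAt_of_append_eq w hv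
  have hsecond := eq_factorAt_of_append_eq w (hv.trans hrep)
  have hlen : pre.length + u.length + suf.length = n := by
    simpa only [List.length_append, length_factorAt] using congrArg List.length hv
  have hx₁ := (congrArg (List.drop (u.length - z.length)) hfirst).trans (drop_factorAt ..)
  have hgap := factorOf_append_gap w (i := A + pre.length + (u.length - z.length))
    (a := u.length - (u.length - z.length)) (j := B + pre.length) (by omega) u.length
  rw [← hx₁, ← hsecond] at hgap
  exact ⟨z, 1 + r, _, _, u, le_rfl, hgap, hpow.append_drop⟩
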